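/- arXiv:1812.09542 — 3 statements merged into one kernel-verified Lean document; each statement's English description precedes it below -/
import Mathlib

section
/- Let 0 < β ≤ γ ≤ 1 and let n = (n_k)_{k≥0} be a strictly increasing sequence of positive integers with n_k/n_{k+1} → 0 as k → ∞. Then underline dim_B C(β,γ,n) ≤ β. -/
open Filter MeasureTheory Metric Set ENNReal Classical
open scoped Topology

noncomputable section

/-- `coverNumber δ A` is the smallest number of sets of diameter at most `δ`
needed to cover `A`. -/
noncomputable def coverNumber {X : Type*} [MetricSpace X] (δ : ℝ) (A : Set X) : ℕ :=
  sInf {n : ℕ | ∃ f : Fin n → Set X, A ⊆ ⋃ i, f i ∧ ∀ i, Metric.diam (f i) ≤ δ}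

/-- Lower box dimension. -/
noncomputable def lowerBoxDim {X : Type*} [MetricSpace X] (A : Set X) : ℝ :=
  Filter.liminf (fun δ : ℝ => Real.log (coverNumber δ A : ℝ) / (-Real.log δ)) (𝓝[>] (0:ℝ))

/-- Upper box dimension. -/
noncomputable def upperBoxDim {X : Type*} [MetricSpace X] (A : Set X) : ℝ :=
  Filter.limsup (fun δ : ℝ => Real.log (coverNumber δ A : ℝ) / (-Real.log δ)) (𝓝[>] (0:ℝ))

/-- Lower modified box dimension: the infimum over countable covers of `A` by bounded
sets of the supremum of the lower box dimensions of the pieces. -/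
noncomputable def lowerMBDim {X : Type*} [MetricSpace X] (A : Set X) : ℝ :=
  sInf {d : ℝ | ∃ E : ℕ → Set X, A ⊆ ⋃ i, E i ∧
    ∀ i, Bornology.IsBounded (E i) ∧ lowerBoxDim (E i) ≤ d}

/-- The packing pre-premeasure at scale `δ`: supremum of `Σ (2 rᵢ)^α` over countable
families of pairwise disjoint closed balls centred in `A` with radii in `(0, δ]`. -/
noncomputable def packingPreAt {X : Type*} [MetricSpace X] (α δ : ℝ) (A : Set X) : ℝ≥0∞ :=
  ⨆ (t : Set ℕ) (x : ℕ → X) (r : ℕ → ℝ)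
    (_ : ∀ i ∈ t, x i ∈ A ∧ 0 < r i ∧ r i ≤ δ)
    (_ : t.PairwiseDisjoint fun i => Metric.closedBall (x i) (r i)),
    ∑' i : t, ENNReal.ofReal ((2 * r (i : ℕ)) ^ α)

/-- The `α`-dimensional packing premeasure. -/
noncomputable def packingPre {X : Type*} [MetricSpace X] (α : ℝ) (A : Set X) : ℝ≥0∞ :=
  ⨅ (δ : ℝ) (_ : 0 < δ), packingPreAt α δ A

/-- The `α`-dimensional packing measure. -/
noncomputable def packingMeasure {X : Type*} [MetricSpace X] (α : ℝ) (A : Set X) : ℝ≥0∞ :=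
  ⨅ (E : ℕ → Set X) (_ : A ⊆ ⋃ i, E i), ∑' i, packingPre α (E i)

/-- The packing dimension. -/
noncomputable def packingDim {X : Type*} [MetricSpace X] (A : Set X) : ℝ :=
  sInf {α : ℝ | 0 ≤ α ∧ packingMeasure α A = 0}

/-- The Assouad dimension. -/
noncomputable def assouadDim {X : Type*} [MetricSpace X] (A : Set X) : ℝ :=
  sInf {α : ℝ | 0 ≤ α ∧ ∃ c ρ : ℝ, 0 < c ∧ 0 < ρ ∧
    ∀ r R : ℝ, 0 < r → r < R → R ≤ ρ → ∀ x ∈ A,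
      (coverNumber r (Metric.ball x R ∩ A) : ℝ) ≤ c * (R / r) ^ α}

/-- The contraction ratio `c_m` of the construction `C(β,γ,n)`: it equals `2^{-1/γ}` if
`n_{2k+1} ≤ m < n_{2k+2}` for some `k`, and `2^{-1/β}` otherwise. -/
noncomputable def cseq (β γ : ℝ) (n : ℕ → ℕ) (m : ℕ) : ℝ :=
  if ∃ k, n (2*k+1) ≤ m ∧ m < n (2*k+2) then (2:ℝ) ^ (-(1/γ)) else (2:ℝ) ^ (-(1/β))

/-- The map `S_v(x) = c x + v (1 - c)` for `v ∈ {0,1}`. -/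
noncomputable def Smap (c : ℝ) (v : Bool) (x : ℝ) : ℝ :=
  c * x + (if v then 1 - c else 0)

/-- `Iaux β γ n m w = S_{m,w_1}(S_{m+1,w_2}(⋯ (S_{m+len-1,w_len}([0,1]))))`. -/
noncomputable def Iaux (β γ : ℝ) (n : ℕ → ℕ) : ℕ → List Bool → Set ℝ
  | _, [] => Set.Icc 0 1
  | m, v :: w => Smap (cseq β γ n m) v '' Iaux β γ n (m + 1) w

/-- The interval `I_w = S_{1,w_1} ∘ ⋯ ∘ S_{m,w_m}([0,1])` for a binary word `w`. -/
noncomputable def Iw (β γ : ℝ) (n : ℕ → ℕ) (w : List Bool) : Set ℝ :=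
  Iaux β γ n 1 w

/-- `C_m(β,γ,n)`: union of the intervals `I_w` over binary words of length `m`. -/
noncomputable def CsetN (β γ : ℝ) (n : ℕ → ℕ) (m : ℕ) : Set ℝ :=
  ⋃ w ∈ {w : List Bool | w.length = m}, Iw β γ n w

/-- The set `C(β,γ,n) = ⋂_m C_m(β,γ,n)`. -/
noncomputable def Cset (β γ : ℝ) (n : ℕ → ℕ) : Set ℝ :=
  ⋂ m, CsetN β γ n m

/-! At scale `δₖ = (2^{-1/β})^{n_{2k+1} - n_{2k}}` the `2^{n_{2k+1}}` intervals `I_w` of level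
`n_{2k+1}` cover `C`: every ratio `c_m` is at most `1`, and on the stretch `[n_{2k}, n_{2k+1})`
it equals `2^{-1/β}`. Hence `log N_{δₖ} / (-log δₖ) ≤ β n_{2k+1} / (n_{2k+1} - n_{2k})`, which
tends to `β` because `n_{2k} / n_{2k+1} → 0`. -/

lemma coverNumber_le_card {X ι : Type*} [MetricSpace X] [Fintype ι] {δ : ℝ} {A : Set X}
    (f : ι → Set X) (hA : A ⊆ ⋃ i, f i) (hf : ∀ i, diam (f i) ≤ δ) :
    coverNumber δ A ≤ Fintype.card ι := by
  let e := Fintype.equivFin ι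
  refine Nat.sInf_le ⟨fun i => f (e.symm i), fun x hx => ?_, fun i => hf _⟩
  obtain ⟨i, hi⟩ := mem_iUnion.1 (hA hx)
  exact mem_iUnion.2 ⟨e i, by simpa using hi⟩

lemma lowerBoxDim_le_of_tendsto {X : Type*} [MetricSpace X] {A : Set X} {δ b : ℕ → ℝ} {s : ℝ}
    (hs : 0 ≤ s) (hδ : Tendsto δ atTop (𝓝[>] 0)) (hb : Tendsto b atTop (𝓝 s))
    (hle : ∀ᶠ k in atTop, Real.log (coverNumber (δ k) A) / -Real.log (δ k) ≤ b k) :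
    lowerBoxDim A ≤ s := by
  rw [lowerBoxDim, liminf_eq]
  -- `0 ≤ s` is needed for the junk value `sSup ∅ = 0`.
  refine Real.sSup_le (fun a ha => ge_of_tendsto hb ?_) hs
  filter_upwards [hδ.eventually ha, hle] with k hak hk using hak.trans hk

lemma tendsto_div_sub_of_tendsto_div_zero {a b : ℕ → ℕ} (hab : ∀ k, a k < b k)
    (h : Tendsto (fun k => (a k : ℝ) / b k) atTop (𝓝 0)) :
    Tendsto (fun k => (b k : ℝ) / (b k - a k : ℕ)) atTop (𝓝 1) := by
  have hlim : Tendsto (fun k => (1 - (a k : ℝ) / b k)⁻¹) atTop (𝓝 1) := by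
    simpa using (tendsto_const_nhds.sub h).inv₀ (by norm_num : (1 : ℝ) - 0 ≠ 0)
  refine hlim.congr fun k => ?_
  have hb : (b k : ℝ) ≠ 0 := by exact_mod_cast (hab k).ne_bot
  rw [Nat.cast_sub (hab k).le, one_sub_div hb, inv_div]

lemma tendsto_sub_atTop_of_tendsto_div_zero {a b : ℕ → ℕ} (hab : ∀ k, a k < b k)
    (h : Tendsto (fun k => (a k : ℝ) / b k) atTop (𝓝 0)) (hb : Tendsto b atTop atTop) :
    Tendsto (fun k => b k - a k) atTop atTop := by
  rw [← tendsto_natCast_atTop_iff (R := ℝ)]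
  have hlim : Tendsto (fun k => 1 - (a k : ℝ) / b k) atTop (𝓝 1) := by
    simpa using tendsto_const_nhds.sub h
  refine ((tendsto_natCast_atTop_iff.2 hb).atTop_mul_pos one_pos hlim).congr fun k => ?_
  have hb : (b k : ℝ) ≠ 0 := by exact_mod_cast (hab k).ne_bot
  rw [Nat.cast_sub (hab k).le]
  field_simp

lemma Smap_mapsTo_Icc {c : ℝ} (hc0 : 0 ≤ c) (hc1 : c ≤ 1) (v : Bool) :
    MapsTo (Smap c v) (Icc 0 1) (Icc 0 1) := by
  rintro x ⟨hx0, hx1⟩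
  cases v <;> simp only [Smap, Bool.false_eq_true, if_false, if_true, mem_Icc] <;>
    constructor <;> nlinarith

lemma lipschitzWith_Smap {c : ℝ} (hc : 0 ≤ c) (v : Bool) :
    LipschitzWith ⟨c, hc⟩ (Smap c v) :=
  LipschitzWith.of_dist_le_mul fun x y => by
    simp only [Smap, Real.dist_eq, add_sub_add_right_eq_sub, ← mul_sub, abs_mul, abs_of_nonneg hc]
    exact le_rfl

section Construction

variable {β γ : ℝ} {n : ℕ → ℕ}

lemma cseq_nonneg (m : ℕ) : 0 ≤ cseq β γ n m := by
  unfold cseq; split <;> positivity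

lemma cseq_le_one (hβ : 0 ≤ β) (hγ : 0 ≤ γ) (m : ℕ) : cseq β γ n m ≤ 1 := by
  unfold cseq
  split <;> exact Real.rpow_le_one_of_one_le_of_nonpos one_le_two (by simp; positivity)

lemma cseq_of_mem_Ico (hn : StrictMono n) {k m : ℕ} (hm : m ∈ Finset.Ico (n (2*k)) (n (2*k+1))) :
    cseq β γ n m = (2:ℝ) ^ (-(1/β)) := by
  rw [Finset.mem_Ico] at hm
  rw [cseq, if_neg]
  rintro ⟨j, hj1, hj2⟩
  rcases lt_or_ge j k with hjk | hjk
  · have : n (2*j+2) ≤ n (2*k) := hn.monotone (by omega)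
    omega
  · have : n (2*k+1) ≤ n (2*j+1) := hn.monotone (by omega)
    omega

lemma Iaux_subset_Icc (hβ : 0 ≤ β) (hγ : 0 ≤ γ) :
    ∀ (w : List Bool) (m : ℕ), Iaux β γ n m w ⊆ Icc 0 1
  | [], _ => subset_rfl
  | v :: w, m => by
    rw [Iaux, image_subset_iff]
    exact (Iaux_subset_Icc hβ hγ w (m + 1)).trans
      (Smap_mapsTo_Icc (cseq_nonneg m) (cseq_le_one hβ hγ m) v)

lemma diam_Iaux_le (hβ : 0 ≤ β) (hγ : 0 ≤ γ) :
    ∀ (w : List Bool) (m : ℕ),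
      diam (Iaux β γ n m w) ≤ ∏ j ∈ Finset.Ico m (m + w.length), cseq β γ n j
  | [], m => by simp [Iaux, Real.diam_Icc zero_le_one]
  | v :: w, m => by
    have hbdd : Bornology.IsBounded (Iaux β γ n (m + 1) w) :=
      isBounded_Icc (0:ℝ) 1 |>.subset (Iaux_subset_Icc hβ hγ w (m + 1))
    rw [Iaux, List.length_cons, Finset.prod_eq_prod_Ico_succ_bot (by omega),
      show m + (w.length + 1) = m + 1 + w.length by omega]
    calc diam (Smap (cseq β γ n m) v '' Iaux β γ n (m + 1) w)
        ≤ cseq β γ n m * diam (Iaux β γ n (m + 1) w) :=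
          (lipschitzWith_Smap (cseq_nonneg m) v).diam_image_le _ hbdd
      _ ≤ _ := mul_le_mul_of_nonneg_left (diam_Iaux_le hβ hγ w (m + 1)) (cseq_nonneg m)

lemma Cset_subset_iUnion_Iw (m : ℕ) :
    Cset β γ n ⊆ ⋃ w : Fin m → Bool, Iw β γ n (List.ofFn w) := by
  intro x hx
  obtain ⟨w, hw, hxw⟩ := mem_iUnion₂.1 (mem_iInter.1 hx m)
  subst hw
  exact mem_iUnion.2 ⟨w.get, by rwa [List.ofFn_get]⟩

lemma coverNumber_Cset_le (hβ : 0 ≤ β) (hγ : 0 ≤ γ) (m : ℕ) {δ : ℝ}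
    (hδ : ∏ j ∈ Finset.Ico 1 (1 + m), cseq β γ n j ≤ δ) : coverNumber δ (Cset β γ n) ≤ 2 ^ m := by
  refine (coverNumber_le_card _ (Cset_subset_iUnion_Iw m) fun w => ?_).trans_eq (by simp)
  exact (diam_Iaux_le hβ hγ _ 1).trans (by simpa using hδ)

lemma coverNumber_Cset_le_of_stretch (hβ : 0 ≤ β) (hγ : 0 ≤ γ) (hn : StrictMono n) {k : ℕ}
    (hk : 1 ≤ n (2*k)) :
    coverNumber (((2:ℝ) ^ (-(1/β))) ^ (n (2*k+1) - n (2*k))) (Cset β γ n) ≤ 2 ^ n (2*k+1) := by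
  refine coverNumber_Cset_le hβ hγ _ ?_
  calc ∏ j ∈ Finset.Ico 1 (1 + n (2*k+1)), cseq β γ n j
      ≤ ∏ j ∈ Finset.Ico (n (2*k)) (n (2*k+1)), cseq β γ n j :=
        Finset.prod_le_prod_of_subset_of_le_one (Finset.Ico_subset_Ico hk (by omega))
          (fun j _ => cseq_nonneg j) fun j _ _ => cseq_le_one hβ hγ j
    _ = _ := by
        rw [Finset.prod_congr rfl fun j hj => cseq_of_mem_Ico hn hj, Finset.prod_const,
          Nat.card_Ico]

end Construction

lemma log_div_neg_log_le {β : ℝ} (hβ : 0 < β) {N b d : ℕ} (hN : N ≤ 2 ^ b) (hd : 0 < d) :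
    Real.log N / -Real.log (((2:ℝ) ^ (-(1/β))) ^ d) ≤ β * (b / d) := by
  have hlog2 : 0 < Real.log 2 := Real.log_pos one_lt_two
  have hlogN : Real.log N ≤ b * Real.log 2 := by
    rcases N.eq_zero_or_pos with rfl | hN0
    · simp only [Nat.cast_zero, Real.log_zero]; positivity
    · rw [← Real.log_pow]
      exact Real.log_le_log (by exact_mod_cast hN0) (by exact_mod_cast hN)
  have hden : -Real.log (((2:ℝ) ^ (-(1/β))) ^ d) = d * Real.log 2 / β := by
    rw [Real.log_pow, Real.log_rpow two_pos]
    field_simp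
  rw [hden, div_le_iff₀ (by positivity)]
  calc Real.log N ≤ b * Real.log 2 := hlogN
    _ = β * (b / d) * (d * Real.log 2 / β) := by field_simp

theorem statement7_general (β γ : ℝ) (hβ : 0 < β) (hβγ : β ≤ γ)
    (n : ℕ → ℕ) (hn : StrictMono n)
    (hnr : Filter.Tendsto (fun k => (n k : ℝ) / (n (k+1) : ℝ)) Filter.atTop (nhds 0)) :
    lowerBoxDim (Cset β γ n) ≤ β := by
  have hγ : 0 ≤ γ := hβ.le.trans hβγ
  have hstretch : ∀ k, n (2*k) < n (2*k+1) := fun k => hn (by omega)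
  have hq : Tendsto (fun k => (n (2*k) : ℝ) / n (2*k+1)) atTop (𝓝 0) :=
    hnr.comp (tendsto_id.const_mul_atTop' two_pos)
  have hlen : Tendsto (fun k => n (2*k+1) - n (2*k)) atTop atTop :=
    tendsto_sub_atTop_of_tendsto_div_zero hstretch hq
      (hn.comp fun _ _ h => by omega : StrictMono fun k => n (2*k+1)).tendsto_atTop
  have hr : (2:ℝ) ^ (-(1/β)) ∈ Ioo 0 1 :=
    ⟨by positivity, Real.rpow_lt_one_of_one_lt_of_neg one_lt_two (by simp; positivity)⟩
  refine lowerBoxDim_le_of_tendsto (δ := fun k => ((2:ℝ) ^ (-(1/β))) ^ (n (2*k+1) - n (2*k)))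
    hβ.le ?_ (by simpa using (tendsto_div_sub_of_tendsto_div_zero hstretch hq).const_mul β) ?_
  · exact tendsto_nhdsWithin_of_tendsto_nhds_of_eventually_within _
      ((tendsto_pow_atTop_nhds_zero_of_lt_one hr.1.le hr.2).comp hlen)
      (Eventually.of_forall fun k => pow_pos hr.1 _)
  · filter_upwards [eventually_ge_atTop 1] with k hk
    exact log_div_neg_log_le hβ (coverNumber_Cset_le_of_stretch hβ.le hγ hn
      ((show 1 ≤ 2*k by omega).trans (hn.id_le _))) (by have := hstretch k; omega)

/-- `lower dim_B C(β,γ,n) ≤ β`. -/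
theorem statement7 (β γ : ℝ) (hβ : 0 < β) (hβγ : β ≤ γ) (hγ1 : γ ≤ 1)
    (n : ℕ → ℕ) (hn : StrictMono n) (hnpos : ∀ k, 0 < n k)
    (hnr : Filter.Tendsto (fun k => (n k : ℝ) / (n (k+1) : ℝ)) Filter.atTop (nhds 0)) :
    lowerBoxDim (Cset β γ n) ≤ β :=
  statement7_general β γ hβ hβγ n hn hnr

end
end

section
/- Let 0 < β ≤ γ ≤ 1 and let n = (n_k)_{k≥0} be a strictly increasing sequence of positive integers. Then dim_A C(β,γ,n) ≤ γ. -/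
open Filter MeasureTheory Metric Set ENNReal Classical
open scoped Topology

noncomputable section

/-!
Only the bounds `2^{-1/β} ≤ c_m ≤ 2^{-1/γ}` on the contraction ratios matter. Given `r < R`, let
`m ≤ q` be the first levels whose basic intervals have length at most `R`, resp. `r`; since one
step shrinks lengths by a factor at least `2^{-1/β}`, these lengths are at least `R 2^{-1/β}`,
resp. `r 2^{-1/β}`. The level-`m` intervals have disjoint interiors, so at most `4 · 2^{1/β}` of
them meet a ball of radius `R`, and each contains `2^{q-m}` level-`q` intervals. Each of the
`q - m` intermediate steps shrinks by a factor at most `2^{-1/γ}`, which gives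
`2^{q-m} ≤ (2^{1/β} R / r)^γ`.
-/

lemma coverNumber_le_card_s8 {X ι : Type*} [MetricSpace X] {δ : ℝ} {A : Set X}
    (s : Finset ι) (g : ι → Set X) (hcov : A ⊆ ⋃ i ∈ s, g i)
    (hdiam : ∀ i ∈ s, Metric.diam (g i) ≤ δ) :
    coverNumber δ A ≤ s.card := by
  refine Nat.sInf_le ⟨fun j => g (s.equivFin.symm j), fun x hx => ?_,
    fun j => hdiam _ (s.equivFin.symm j).2⟩
  obtain ⟨i, hi, hxi⟩ := mem_iUnion₂.1 (hcov hx)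
  exact mem_iUnion.2 ⟨s.equivFin ⟨i, hi⟩, by simpa using hxi⟩

lemma card_mul_le_of_pairwiseDisjoint_Ioo {ι : Type*} (s : Finset ι) (a : ι → ℝ)
    {ℓ u v : ℝ} (huv : u ≤ v)
    (hdisj : (s : Set ι).PairwiseDisjoint fun i => Ioo (a i) (a i + ℓ))
    (hsub : ∀ i ∈ s, Ioo (a i) (a i + ℓ) ⊆ Ioo u v) :
    s.card * ℓ ≤ v - u := by
  have hvol : (s.card : ℝ≥0∞) * ENNReal.ofReal ℓ ≤ ENNReal.ofReal (v - u) :=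
    calc (s.card : ℝ≥0∞) * ENNReal.ofReal ℓ
        = volume (⋃ i ∈ s, Ioo (a i) (a i + ℓ)) := by
          rw [measure_biUnion_finset hdisj fun _ _ => measurableSet_Ioo]
          simp [Real.volume_Ioo]
      _ ≤ volume (Ioo u v) := measure_mono (iUnion₂_subset hsub)
      _ = ENNReal.ofReal (v - u) := Real.volume_Ioo
  rw [← ENNReal.ofReal_natCast, ← ENNReal.ofReal_mul (Nat.cast_nonneg _),
    ENNReal.ofReal_le_ofReal_iff (sub_nonneg.2 huv)] at hvol
  exact hvol

lemma rpow_neg_one_div_le_half {γ : ℝ} (hγ : 0 < γ) (hγ1 : γ ≤ 1) :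
    (2 : ℝ) ^ (-(1 / γ)) ≤ 1 / 2 := by
  calc (2 : ℝ) ^ (-(1 / γ)) ≤ 2 ^ (-1 : ℝ) :=
        Real.rpow_le_rpow_of_exponent_le one_le_two (by rw [neg_le_neg_iff, le_div_iff₀ hγ]; simpa)
    _ = 1 / 2 := by norm_num [Real.rpow_neg_one]

lemma two_pow_le_inv_rpow_of_le {γ t : ℝ} (hγ : 0 < γ) (ht : 0 < t) {d : ℕ}
    (h : t ≤ ((2 : ℝ) ^ (-(1 / γ))) ^ d) : (2 : ℝ) ^ d ≤ t⁻¹ ^ γ := by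
  have hpow : (((2 : ℝ) ^ (-(1 / γ))) ^ d) ^ γ = ((2 : ℝ) ^ d)⁻¹ := by
    rw [← Real.rpow_mul_natCast two_pos.le, ← Real.rpow_mul two_pos.le,
      show -(1 / γ) * d * γ = -d by field_simp, Real.rpow_neg two_pos.le, Real.rpow_natCast]
  have := Real.rpow_le_rpow ht.le h hγ.le
  rw [hpow] at this
  rw [Real.inv_rpow ht.le]
  exact le_inv_of_le_inv₀ (Real.rpow_pos_of_pos ht γ) this

def moranInterval (c : ℕ → ℝ) : ℕ → List Bool → Set ℝ
  | _, [] => Icc 0 1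
  | m, v :: w => Smap (c m) v '' moranInterval c (m + 1) w

def moranSet (c : ℕ → ℝ) : Set ℝ :=
  ⋂ k, ⋃ w ∈ {w : List Bool | w.length = k}, moranInterval c 1 w

def moranScale (c : ℕ → ℝ) (m p : ℕ) : ℝ :=
  ∏ j ∈ Finset.range p, c (m + j)

def moranLeft (c : ℕ → ℝ) : ℕ → List Bool → ℝ
  | _, [] => 0
  | m, v :: w => c m * moranLeft c (m + 1) w + if v then 1 - c m else 0

section MoranSet

variable {c : ℕ → ℝ}

lemma moranScale_zero (m : ℕ) : moranScale c m 0 = 1 := by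
  simp [moranScale]

lemma moranScale_succ (m p : ℕ) : moranScale c m (p + 1) = c m * moranScale c (m + 1) p := by
  simp only [moranScale, Finset.prod_range_succ', add_zero, mul_comm (c m), add_right_comm m 1,
    add_assoc]

lemma moranScale_add (m p q : ℕ) :
    moranScale c m (p + q) = moranScale c m p * moranScale c (m + p) q := by
  simp only [moranScale, Finset.prod_range_add, add_assoc]

lemma moranScale_pos (hc0 : ∀ m, 0 < c m) (m p : ℕ) : 0 < moranScale c m p :=
  Finset.prod_pos fun _ _ => hc0 _

lemma moranScale_le_pow {b : ℝ} (hc0 : ∀ m, 0 < c m) (hcb : ∀ m, c m ≤ b) (m p : ℕ) :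
    moranScale c m p ≤ b ^ p := by
  simpa [moranScale] using Finset.prod_le_prod (s := Finset.range p) (fun _ _ => (hc0 _).le)
    fun j _ => hcb (m + j)

lemma moranScale_antitone (hc0 : ∀ m, 0 < c m) (hc1 : ∀ m, c m ≤ 1) (m : ℕ) :
    Antitone (moranScale c m) := by
  refine antitone_nat_of_succ_le fun p => ?_
  rw [moranScale_add, moranScale_succ, moranScale_zero, mul_one]
  exact mul_le_of_le_one_right (moranScale_pos hc0 m p).le (hc1 _)

lemma moranLeft_nonneg (hc0 : ∀ m, 0 < c m) (hc1 : ∀ m, c m ≤ 1) (m : ℕ) (w : List Bool) :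
    0 ≤ moranLeft c m w := by
  induction w generalizing m with
  | nil => exact le_rfl
  | cons v w ih =>
    have := mul_nonneg (hc0 m).le (ih (m + 1))
    have := hc1 m
    simp only [moranLeft]
    split_ifs <;> linarith

lemma moranLeft_add_moranScale_le_one (hc0 : ∀ m, 0 < c m) (hc1 : ∀ m, c m ≤ 1) (m : ℕ)
    (w : List Bool) : moranLeft c m w + moranScale c m w.length ≤ 1 := by
  induction w generalizing m with
  | nil => simp [moranLeft, moranScale_zero]
  | cons v w ih =>
    have := mul_le_mul_of_nonneg_left (ih (m + 1)) (hc0 m).le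
    have := hc1 m
    simp only [moranLeft, List.length_cons, moranScale_succ]
    split_ifs <;> linarith

lemma moranInterval_eq_Icc (hc0 : ∀ m, 0 < c m) (m : ℕ) (w : List Bool) :
    moranInterval c m w =
      Icc (moranLeft c m w) (moranLeft c m w + moranScale c m w.length) := by
  induction w generalizing m with
  | nil => simp [moranInterval, moranLeft, moranScale_zero]
  | cons v w ih =>
    have hS : Smap (c m) v = fun x => c m * x + if v then 1 - c m else 0 := rfl
    rw [moranInterval, ih, hS, image_affine_Icc' (hc0 m), List.length_cons, moranScale_succ,
      moranLeft]
    ring_nf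

lemma moranInterval_append_subset (hc0 : ∀ m, 0 < c m) (hc1 : ∀ m, c m ≤ 1)
    (w₁ w₂ : List Bool) (m : ℕ) : moranInterval c m (w₁ ++ w₂) ⊆ moranInterval c m w₁ := by
  induction w₁ generalizing m with
  | nil =>
    rw [List.nil_append, moranInterval_eq_Icc hc0]
    exact Icc_subset_Icc (moranLeft_nonneg hc0 hc1 m w₂)
      (moranLeft_add_moranScale_le_one hc0 hc1 m w₂)
  | cons v w ih => exact image_mono (ih (m + 1))

lemma moranLeft_separated (hc0 : ∀ m, 0 < c m) (hc_half : ∀ m, c m ≤ 1 / 2)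
    {w w' : List Bool} (hlen : w.length = w'.length) (hne : w ≠ w') (m : ℕ) :
    moranLeft c m w + moranScale c m w.length ≤ moranLeft c m w' ∨
      moranLeft c m w' + moranScale c m w.length ≤ moranLeft c m w := by
  have hc1 : ∀ m, c m ≤ 1 := fun m => (hc_half m).trans (by norm_num)
  induction w generalizing w' m with
  | nil => exact absurd (List.eq_nil_of_length_eq_zero hlen.symm).symm hne
  | cons v t ih =>
    obtain _ | ⟨v', t'⟩ := w'
    · simp at hlen
    simp only [List.length_cons, Nat.add_right_cancel_iff] at hlen
    simp only [moranLeft, List.length_cons, moranScale_succ]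
    have hc := hc0 m
    have hh := hc_half m
    have ht := mul_le_mul_of_nonneg_left (moranLeft_add_moranScale_le_one hc0 hc1 (m + 1) t) hc.le
    have ht' := mul_le_mul_of_nonneg_left
      (hlen ▸ moranLeft_add_moranScale_le_one hc0 hc1 (m + 1) t') hc.le
    have ha := mul_nonneg hc.le (moranLeft_nonneg hc0 hc1 (m + 1) t)
    have ha' := mul_nonneg hc.le (moranLeft_nonneg hc0 hc1 (m + 1) t')
    by_cases hv : v = v'
    · subst hv
      rcases ih hlen (fun h => hne (h ▸ rfl)) (m + 1) with h | h <;>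
        have := mul_le_mul_of_nonneg_left h hc.le
      · left; split_ifs <;> linarith
      · right; split_ifs <;> linarith
    · cases v <;> cases v' <;> simp only [not_true_eq_false, reduceCtorEq] at hv
      · left; simp only [Bool.false_eq_true, ↓reduceIte]; linarith
      · right; simp only [Bool.false_eq_true, ↓reduceIte]; linarith

lemma card_mul_moranScale_le (hc0 : ∀ m, 0 < c m) (hc_half : ∀ m, c m ≤ 1 / 2)
    {k m : ℕ} {x R : ℝ} (hR : 0 ≤ R) (W : Finset (List.Vector Bool m))
    (hW : ∀ w ∈ W, (moranInterval c k w.toList ∩ ball x R).Nonempty) :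
    W.card * moranScale c k m ≤ 2 * R + 2 * moranScale c k m := by
  set ℓ := moranScale c k m
  have hℓ : 0 < ℓ := moranScale_pos hc0 k m
  have := card_mul_le_of_pairwiseDisjoint_Ioo W (fun w => moranLeft c k w.toList)
    (ℓ := ℓ) (u := x - R - ℓ) (v := x + R + ℓ) (by linarith) ?_ ?_
  · linarith
  · intro w _ w' _ hne
    have h := moranLeft_separated hc0 hc_half (w.toList_length.trans w'.toList_length.symm)
      (List.Vector.toList_injective.ne hne) k
    rw [w.toList_length] at h
    refine Ioo_disjoint_Ioo.2 ?_
    rcases h with h | h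
    · exact (min_le_left _ _).trans (h.trans (le_max_right _ _))
    · exact (min_le_right _ _).trans (h.trans (le_max_left _ _))
  · intro w hw
    obtain ⟨y, hyI, hyB⟩ := hW w hw
    rw [moranInterval_eq_Icc hc0, w.toList_length] at hyI
    rw [mem_ball, Real.dist_eq, abs_lt] at hyB
    exact Ioo_subset_Ioo (by linarith [hyI.2]) (by linarith [hyI.1])

lemma coverNumber_ball_inter_moranSet_le (hc0 : ∀ m, 0 < c m) (hc1 : ∀ m, c m ≤ 1)
    {x R r : ℝ} {m d : ℕ} (hr : moranScale c 1 (m + d) ≤ r) :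
    coverNumber r (ball x R ∩ moranSet c) ≤
      (Finset.univ.filter fun w : List.Vector Bool m =>
        (moranInterval c 1 w.toList ∩ ball x R).Nonempty).card * 2 ^ d := by
  set W := Finset.univ.filter fun w : List.Vector Bool m =>
    (moranInterval c 1 w.toList ∩ ball x R).Nonempty
  calc coverNumber r (ball x R ∩ moranSet c)
      ≤ (W ×ˢ (Finset.univ : Finset (List.Vector Bool d))).card :=
        coverNumber_le_card_s8 _ (fun p => moranInterval c 1 (p.1.toList ++ p.2.toList)) ?_ ?_
    _ = W.card * 2 ^ d := by simp [Finset.card_product, card_vector]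
  · rintro y ⟨hyB, hyC⟩
    obtain ⟨w, hw, hyw⟩ : ∃ w : List Bool, w.length = m + d ∧ y ∈ moranInterval c 1 w := by
      simpa [moranSet] using mem_iInter.1 hyC (m + d)
    let w₁ : List.Vector Bool m := ⟨w.take m, by simp [hw]⟩
    let w₂ : List.Vector Bool d := ⟨w.drop m, by simp [hw]⟩
    have hsplit : w₁.toList ++ w₂.toList = w := List.take_append_drop m w
    rw [← hsplit] at hyw
    refine mem_iUnion₂.2 ⟨(w₁, w₂), Finset.mem_product.2 ⟨?_, Finset.mem_univ _⟩, hyw⟩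
    exact Finset.mem_filter.2
      ⟨Finset.mem_univ _, y, moranInterval_append_subset hc0 hc1 _ _ 1 hyw, hyB⟩
  · intro p _
    rw [moranInterval_eq_Icc hc0,
      Real.diam_Icc (le_add_of_nonneg_right (moranScale_pos hc0 _ _).le)]
    simpa using hr

lemma exists_moranScale_succ_le_lt {a : ℝ} (ha : 0 < a) (hca : ∀ m, a ≤ c m)
    (hc_half : ∀ m, c m ≤ 1 / 2) (m : ℕ) {ε : ℝ} (hε0 : 0 < ε) (hε1 : ε < 1) :
    ∃ k, moranScale c m (k + 1) ≤ ε ∧ ε * a ≤ moranScale c m (k + 1) ∧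
      ε < moranScale c m k := by
  have hc0 : ∀ m, 0 < c m := fun m => ha.trans_le (hca m)
  have hex : ∃ k, moranScale c m k ≤ ε := by
    obtain ⟨k, hk⟩ := exists_pow_lt_of_lt_one hε0 (by norm_num : (1 / 2 : ℝ) < 1)
    exact ⟨k, (moranScale_le_pow hc0 hc_half m k).trans hk.le⟩
  obtain ⟨k, hk⟩ : ∃ k, Nat.find hex = k + 1 := by
    refine Nat.exists_eq_succ_of_ne_zero fun h => ?_
    have := Nat.find_spec hex
    rw [h, moranScale_zero] at this
    linarith
  have hlt : ε < moranScale c m k := not_le.1 (Nat.find_min hex (by omega))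
  refine ⟨k, hk ▸ Nat.find_spec hex, ?_, hlt⟩
  rw [moranScale_add, moranScale_succ, moranScale_zero, mul_one]
  exact mul_le_mul hlt.le (hca _) ha.le (moranScale_pos hc0 m k).le

theorem coverNumber_ball_inter_moranSet_le_rpow {a γ : ℝ} (hγ : 0 < γ) (hγ1 : γ ≤ 1)
    (ha : 0 < a) (hca : ∀ m, a ≤ c m) (hcγ : ∀ m, c m ≤ 2 ^ (-(1 / γ))) {x r R : ℝ}
    (hr : 0 < r) (hrR : r < R) (hR : R ≤ 1 / 2) :
    (coverNumber r (ball x R ∩ moranSet c) : ℝ) ≤ 4 / a * a⁻¹ ^ γ * (R / r) ^ γ := by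
  have hc0 : ∀ m, 0 < c m := fun m => ha.trans_le (hca m)
  have hc_half : ∀ m, c m ≤ 1 / 2 := fun m => (hcγ m).trans (rpow_neg_one_div_le_half hγ hγ1)
  have hc1 : ∀ m, c m ≤ 1 := fun m => (hc_half m).trans (by norm_num)
  have hR0 : 0 < R := hr.trans hrR
  obtain ⟨M, hMR, hRM, hR_lt⟩ :=
    exists_moranScale_succ_le_lt ha hca hc_half 1 hR0 (by linarith)
  obtain ⟨Q, hQr, hrQ, -⟩ := exists_moranScale_succ_le_lt ha hca hc_half 1 hr (by linarith)
  obtain ⟨d, rfl⟩ : ∃ d, Q = M + d := Nat.exists_eq_add_of_le <| not_lt.1 fun hQM =>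
    (hQr.trans hrR.le).not_gt (hR_lt.trans_le (moranScale_antitone hc0 hc1 1 hQM))
  set ℓ := moranScale c 1 (M + 1)
  have hsplit : moranScale c 1 (M + d + 1) = ℓ * moranScale c (1 + (M + 1)) d := by
    rw [← moranScale_add, add_right_comm]
  have hratio : (2 : ℝ) ^ d ≤ (r * a / R)⁻¹ ^ γ := by
    refine two_pow_le_inv_rpow_of_le hγ (by positivity) ?_
    rw [div_le_iff₀ hR0, mul_comm _ R]
    exact (hsplit ▸ hrQ).trans (mul_le_mul hMR (moranScale_le_pow hc0 hcγ _ _)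
      (moranScale_pos hc0 _ _).le hR0.le)
  set W := Finset.univ.filter fun w : List.Vector Bool (M + 1) =>
    (moranInterval c 1 w.toList ∩ ball x R).Nonempty
  have hW : (W.card : ℝ) ≤ 4 / a := by
    have hcount := card_mul_moranScale_le hc0 hc_half hR0.le W fun w hw =>
      (Finset.mem_filter.1 hw).2
    rw [le_div_iff₀ ha]
    nlinarith
  have hcover := coverNumber_ball_inter_moranSet_le hc0 hc1 (x := x) (R := R) (r := r)
    (m := M + 1) (d := d) (by rwa [add_right_comm])
  calc (coverNumber r (ball x R ∩ moranSet c) : ℝ) ≤ W.card * 2 ^ d := by exact_mod_cast hcover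
    _ ≤ 4 / a * (r * a / R)⁻¹ ^ γ := mul_le_mul hW hratio (by positivity) (by positivity)
    _ = 4 / a * a⁻¹ ^ γ * (R / r) ^ γ := by
      rw [mul_assoc, ← Real.mul_rpow (by positivity) (by positivity)]
      congr 2
      field_simp

theorem assouadDim_moranSet_le {a γ : ℝ} (hγ : 0 < γ) (hγ1 : γ ≤ 1) (ha : 0 < a)
    (hca : ∀ m, a ≤ c m) (hcγ : ∀ m, c m ≤ 2 ^ (-(1 / γ))) :
    assouadDim (moranSet c) ≤ γ :=
  csInf_le ⟨0, fun _ h => h.1⟩ ⟨hγ.le, 4 / a * a⁻¹ ^ γ, 1 / 2, by positivity, by norm_num,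
    fun _ _ hr hrR hR _ _ => coverNumber_ball_inter_moranSet_le_rpow hγ hγ1 ha hca hcγ hr hrR hR⟩

end MoranSet

lemma Iaux_eq_moranInterval (β γ : ℝ) (n : ℕ → ℕ) : Iaux β γ n = moranInterval (cseq β γ n) := by
  funext m w
  induction w generalizing m with
  | nil => rfl
  | cons v w ih => simp only [Iaux, moranInterval, ih]

lemma Cset_eq_moranSet (β γ : ℝ) (n : ℕ → ℕ) : Cset β γ n = moranSet (cseq β γ n) := by
  simp only [Cset, CsetN, Iw, Iaux_eq_moranInterval, moranSet]

lemma cseq_mem_Icc {β γ : ℝ} (hβ : 0 < β) (hβγ : β ≤ γ) (n : ℕ → ℕ) (m : ℕ) :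
    cseq β γ n m ∈ Icc ((2 : ℝ) ^ (-(1 / β))) (2 ^ (-(1 / γ))) := by
  have h : (2 : ℝ) ^ (-(1 / β)) ≤ 2 ^ (-(1 / γ)) :=
    Real.rpow_le_rpow_of_exponent_le one_le_two (neg_le_neg (one_div_le_one_div_of_le hβ hβγ))
  unfold cseq
  split_ifs
  exacts [⟨h, le_rfl⟩, ⟨le_rfl, h⟩]

theorem statement8_general (β γ : ℝ) (hβ : 0 < β) (hβγ : β ≤ γ) (hγ1 : γ ≤ 1)
    (n : ℕ → ℕ) :
    assouadDim (Cset β γ n) ≤ γ := by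
  rw [Cset_eq_moranSet]
  exact assouadDim_moranSet_le (hβ.trans_le hβγ) hγ1 (by positivity)
    (fun m => (cseq_mem_Icc hβ hβγ n m).1) fun m => (cseq_mem_Icc hβ hβγ n m).2

/-- `dim_A C(β,γ,n) ≤ γ`. -/
theorem statement8 (β γ : ℝ) (hβ : 0 < β) (hβγ : β ≤ γ) (hγ1 : γ ≤ 1)
    (n : ℕ → ℕ) (hn : StrictMono n) (hnpos : ∀ k, 0 < n k) :
    assouadDim (Cset β γ n) ≤ γ :=
  statement8_general β γ hβ hβγ hγ1 n

end
end

section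
/- Let 0 < γ ≤ 1 and let a = (a_k)_{k≥0}, b = (b_k)_{k≥0} be strictly increasing sequences of positive integers with a_0 = b_0 = 1, a_j − a_i ≤ b_j − b_i whenever i ≤ j, a_k/b_k → 0 and b_k/a_{k+1} → 0 as k → ∞. Then the Hausdorff dimension of F(γ,a,b) is 0. -/
/-! Fix `m` and `d > 0`. Every point of `F` lies in an interval `V_{uv}` where `u` has length `m` and
`|uv| = a_{f(u)}`: the intervals are nested because `a_j - a_i ≤ b_j - b_i`, and by the reset rule
`V_{uv}` has length `α^{-b_{f(u)}}`. There are `2^{a_{f(u)} - m}` such `v` for each `u`, and since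
`f(u) > m` and `a_k / b_k → 0`, for large `m` the `d`-th powers of these lengths sum to at most
`2^{-m}`. Hence `μH[d] F = 0` for every `d > 0`. -/

open Filter MeasureTheory Metric Set ENNReal Classical
open scoped Topology

noncomputable section

/-- The bijection between finite binary words and positive integers:
`f(ε) = 1` and `f(w_1 ⋯ w_n) = 2^n + Σ_{i=1}^n w_i 2^{n-i}`. -/
def findex : List Bool → ℕ
  | [] => 1
  | v :: w => findex w + (if v then 2 else 1) * 2 ^ w.length

/-- The length of the interval `V_w`, computed on the *reversed* word (last letter
first), so that the parent of `v :: w` is `w`.  If there exists `m < n` with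
`n = a_{f(w_1 ⋯ w_m)}` then the length is `α^{-b_{f(w_1⋯w_m)}}` where `α = 2^{1/γ}`;
otherwise it is `α⁻¹` times the length of the parent interval. -/
noncomputable def Vlen' (γ : ℝ) (a b : ℕ → ℕ) : List Bool → ℝ
  | [] => 1
  | v :: w =>
    if h : ∃ m, m < w.length + 1 ∧ w.length + 1 = a (findex (((v :: w).reverse).take m)) then
      (((2:ℝ) ^ ((1:ℝ)/γ)) ^ (b (findex (((v :: w).reverse).take (Nat.find h)))))⁻¹
    else
      ((2:ℝ) ^ ((1:ℝ)/γ))⁻¹ * Vlen' γ a b w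

/-- The left endpoint of `V_w`, computed on the reversed word: a child is placed at the
extreme left of its parent if its last letter is `0`, at the extreme right if it is `1`. -/
noncomputable def Vleft' (γ : ℝ) (a b : ℕ → ℕ) : List Bool → ℝ
  | [] => 0
  | v :: w =>
    if v then Vleft' γ a b w + Vlen' γ a b w - Vlen' γ a b (v :: w)
    else Vleft' γ a b w

/-- The closed interval `V_w` (for the word `w` in usual order). -/
noncomputable def Vset (γ : ℝ) (a b : ℕ → ℕ) (w : List Bool) : Set ℝ :=
  Set.Icc (Vleft' γ a b w.reverse) (Vleft' γ a b w.reverse + Vlen' γ a b w.reverse)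

/-- `F_m(γ,a,b)`: union of the `V_w` over binary words of length `m`. -/
noncomputable def FsetN (γ : ℝ) (a b : ℕ → ℕ) (m : ℕ) : Set ℝ :=
  ⋃ w ∈ {w : List Bool | w.length = m}, Vset γ a b w

/-- The set `F(γ,a,b) = ⋂_m F_m(γ,a,b)`. -/
noncomputable def Fset (γ : ℝ) (a b : ℕ → ℕ) : Set ℝ :=
  ⋂ m, FsetN γ a b m

/-- For `d > 0` the mesh of the covers need not be controlled separately: a set of diameter `δ`
contributes `δ ^ d` to the sum. -/
theorem hausdorffMeasure_eq_zero_of_tendsto_sum {X : Type*} [EMetricSpace X] [MeasurableSpace X]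
    [BorelSpace X] {ι : ℕ → Type*} [∀ n, Fintype (ι n)] {d : ℝ} (hd : 0 < d) {s : Set X}
    (t : ∀ n, ι n → Set X) (hcov : ∀ n, s ⊆ ⋃ i, t n i)
    (hsum : Tendsto (fun n => ∑ i, ediam (t n i) ^ d) atTop (𝓝 0)) : μH[d] s = 0 := by
  have hmesh : Tendsto (fun n => (∑ i, ediam (t n i) ^ d) ^ d⁻¹) atTop (𝓝 0) := by
    have := ((ENNReal.continuous_rpow_const (y := d⁻¹)).tendsto 0).comp hsum
    rwa [ENNReal.zero_rpow_of_pos (inv_pos.mpr hd)] at this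
  have hdiam : ∀ n i, ediam (t n i) ≤ (∑ i, ediam (t n i) ^ d) ^ d⁻¹ := fun n i =>
    calc ediam (t n i) = (ediam (t n i) ^ d) ^ d⁻¹ := (ENNReal.rpow_rpow_inv hd.ne' _).symm
      _ ≤ _ := by
        gcongr
        exact Finset.single_le_sum (f := fun j => ediam (t n j) ^ d) (fun j _ => zero_le)
          (Finset.mem_univ i)
  refine le_antisymm ?_ zero_le
  calc μH[d] s ≤ liminf (fun n => ∑ i, ediam (t n i) ^ d) atTop :=
        Measure.hausdorffMeasure_le_liminf_sum d s _ hmesh t (.of_forall hdiam) (.of_forall hcov)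
    _ = 0 := hsum.liminf_eq

theorem length_lt_findex (w : List Bool) : w.length < findex w := by
  induction w with
  | nil => simp [findex]
  | cons v w ih =>
    have : 1 ≤ (if v then 2 else 1) * 2 ^ w.length := by
      have := @Nat.one_le_two_pow w.length
      cases v <;> simp <;> omega
    simp only [findex, List.length_cons]
    omega

theorem findex_lt_two_pow (w : List Bool) : findex w < 2 ^ (w.length + 1) := by
  induction w with
  | nil => simp [findex]
  | cons v w ih =>
    have : (if v then 2 else 1) * 2 ^ w.length ≤ 2 * 2 ^ w.length := by
      cases v <;> simp
    simp only [findex, List.length_cons, pow_succ] at ih ⊢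
    omega

def Vexp (a b : ℕ → ℕ) : List Bool → ℕ
  | [] => 0
  | v :: w =>
    if h : ∃ m, m < w.length + 1 ∧ w.length + 1 = a (findex (((v :: w).reverse).take m)) then
      b (findex (((v :: w).reverse).take (Nat.find h)))
    else Vexp a b w + 1

theorem Vlen'_eq (γ : ℝ) (a b : ℕ → ℕ) (w : List Bool) :
    Vlen' γ a b w = (((2:ℝ) ^ ((1:ℝ)/γ)) ^ Vexp a b w)⁻¹ := by
  induction w with
  | nil => simp [Vlen', Vexp]
  | cons v w ih =>
    rw [Vlen', Vexp]
    split_ifs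
    · rfl
    · rw [ih, pow_succ, mul_inv, mul_comm]

/-- `g` is the index of the last reset along `w`; after it the exponent grows by one per letter. -/
theorem exists_Vexp_add (a b : ℕ → ℕ) (ha0 : a 0 = 1) (hb0 : b 0 = 1) (w : List Bool) :
    ∃ g, a g ≤ w.length + 1 ∧ Vexp a b w + a g = b g + w.length := by
  induction w with
  | nil => exact ⟨0, by simp [ha0], by simp [Vexp, ha0, hb0]⟩
  | cons v w ih =>
    rw [Vexp]
    split_ifs with h
    · have := (Nat.find_spec h).2
      refine ⟨findex ((v :: w).reverse.take (Nat.find h)), ?_, ?_⟩ <;>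
        simp only [List.length_cons] <;> omega
    · obtain ⟨g, hg, hgw⟩ := ih
      exact ⟨g, by simp only [List.length_cons]; omega, by simp only [List.length_cons]; omega⟩

theorem Vexp_le_Vexp_cons {a b : ℕ → ℕ} (ha : StrictMono a) (hb : Monotone b)
    (ha0 : a 0 = 1) (hb0 : b 0 = 1) (hab : ∀ i j, i ≤ j → a j - a i ≤ b j - b i)
    (v : Bool) (w : List Bool) : Vexp a b w ≤ Vexp a b (v :: w) := by
  obtain ⟨g, hg, hgw⟩ := exists_Vexp_add a b ha0 hb0 w
  rw [Vexp]
  split_ifs with h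
  · set f := findex ((v :: w).reverse.take (Nat.find h))
    have hf : w.length + 1 = a f := (Nat.find_spec h).2
    have hgf : g ≤ f := ha.le_iff_le.mp (by omega)
    have := hab g f hgf
    have := hb hgf
    omega
  · omega

theorem Vexp_of_eq_a_findex_take {a : ℕ → ℕ} (ha : Function.Injective a) (b : ℕ → ℕ)
    {w : List Bool} {m : ℕ} (hm : m < w.length) (hw : w.length = a (findex (w.take m))) :
    Vexp a b w.reverse = b (findex (w.take m)) := by
  obtain ⟨v, t, hvt⟩ : ∃ v t, w.reverse = v :: t :=
    List.ne_nil_iff_exists_cons.mp (by simpa using List.ne_nil_of_length_pos (by omega))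
  have hlen : t.length + 1 = w.length := by simpa using (congrArg List.length hvt).symm
  have hrev : (v :: t).reverse = w := by rw [← hvt, List.reverse_reverse]
  have h : ∃ m', m' < t.length + 1 ∧ t.length + 1 = a (findex (((v :: t).reverse).take m')) := by
    rw [hrev, hlen]; exact ⟨m, hm, hw⟩
  rw [hvt, Vexp, dif_pos h]
  exact congrArg b (ha (by rw [← (Nat.find_spec h).2, hlen, hw]))

theorem Vlen'_pos (γ : ℝ) (a b : ℕ → ℕ) (w : List Bool) : 0 < Vlen' γ a b w := by
  rw [Vlen'_eq]; positivity

theorem Vset_append_singleton_subset {γ : ℝ} (hγ : 0 ≤ γ) {a b : ℕ → ℕ} (ha : StrictMono a)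
    (hb : Monotone b) (ha0 : a 0 = 1) (hb0 : b 0 = 1)
    (hab : ∀ i j, i ≤ j → a j - a i ≤ b j - b i) (w : List Bool) (v : Bool) :
    Vset γ a b (w ++ [v]) ⊆ Vset γ a b w := by
  have hlen : Vlen' γ a b (v :: w.reverse) ≤ Vlen' γ a b w.reverse := by
    rw [Vlen'_eq, Vlen'_eq]
    have : 1 ≤ (2:ℝ) ^ ((1:ℝ) / γ) := Real.one_le_rpow one_le_two (by positivity)
    gcongr
    exact Vexp_le_Vexp_cons ha hb ha0 hb0 hab v _
  have := Vlen'_pos γ a b (v :: w.reverse)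
  simp only [Vset, List.reverse_append, List.reverse_singleton, List.singleton_append]
  cases v <;> simp only [Vleft', Bool.false_eq_true, ite_false, ite_true] <;>
    exact Icc_subset_Icc (by linarith) (by linarith)

theorem Vset_append_subset {γ : ℝ} (hγ : 0 ≤ γ) {a b : ℕ → ℕ} (ha : StrictMono a)
    (hb : Monotone b) (ha0 : a 0 = 1) (hb0 : b 0 = 1)
    (hab : ∀ i j, i ≤ j → a j - a i ≤ b j - b i) (u s : List Bool) :
    Vset γ a b (u ++ s) ⊆ Vset γ a b u := by
  induction s using List.reverseRecOn with
  | nil => simp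
  | append_singleton s v ih =>
    rw [← List.append_assoc]
    exact (Vset_append_singleton_subset hγ ha hb ha0 hb0 hab _ v).trans ih

theorem ediam_Vset (γ : ℝ) (a b : ℕ → ℕ) (w : List Bool) :
    ediam (Vset γ a b w) = (2⁻¹ : ℝ≥0∞) ^ ((Vexp a b w.reverse : ℝ) / γ) := by
  rw [Vset, Real.ediam_Icc, add_sub_cancel_left, Vlen'_eq, ← Real.rpow_natCast,
    ← Real.rpow_mul zero_le_two, ENNReal.ofReal_inv_of_pos (by positivity),
    ← ENNReal.ofReal_rpow_of_pos zero_lt_two, ENNReal.ofReal_ofNat, ENNReal.inv_rpow,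
    one_div_mul_eq_div]

theorem Fset_subset_iUnion_Vset {γ : ℝ} (hγ : 0 ≤ γ) {a b : ℕ → ℕ} (ha : StrictMono a)
    (hb : Monotone b) (ha0 : a 0 = 1) (hb0 : b 0 = 1)
    (hab : ∀ i j, i ≤ j → a j - a i ≤ b j - b i) (m : ℕ) :
    Fset γ a b ⊆ ⋃ p : Σ u : List.Vector Bool m, List.Vector Bool (a (findex u.toList) - m),
      Vset γ a b (p.1.toList ++ p.2.toList) := by
  intro x hx
  obtain ⟨W, hWlen, hxW⟩ : ∃ W : List Bool, W.length = a (2 ^ (m + 1)) ∧ x ∈ Vset γ a b W := by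
    simpa [FsetN] using mem_iInter.mp hx (a (2 ^ (m + 1)))
  have hm : m ≤ W.length := by
    have := ha.le_apply (x := 2 ^ (m + 1))
    have := Nat.lt_two_pow_self (n := m + 1)
    omega
  set u : List.Vector Bool m := ⟨W.take m, by simp [hm]⟩
  set f := findex u.toList
  have hmf : m < f := by simpa using length_lt_findex u.toList
  have hfM : a f ≤ W.length := by
    have := findex_lt_two_pow u.toList
    simp only [List.Vector.toList_length] at this
    exact hWlen ▸ ha.monotone this.le
  have hmaf : m ≤ a f := hmf.le.trans ha.le_apply
  set t : List.Vector Bool (a f - m) := ⟨(W.drop m).take (a f - m), by simp; omega⟩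
  have hW : W = (u.toList ++ t.toList) ++ W.drop (a f) := by
    simp only [u, t, List.Vector.toList_mk, ← List.take_add, Nat.add_sub_cancel' hmaf,
      List.take_append_drop]
  refine mem_iUnion.mpr ⟨⟨u, t⟩, ?_⟩
  rw [hW] at hxW
  exact Vset_append_subset hγ ha hb ha0 hb0 hab _ _ hxW

theorem ediam_Vset_append {γ : ℝ} {a : ℕ → ℕ} (ha : StrictMono a) (b : ℕ → ℕ) {m : ℕ}
    (u : List.Vector Bool m) (t : List.Vector Bool (a (findex u.toList) - m)) :
    ediam (Vset γ a b (u.toList ++ t.toList)) =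
      (2⁻¹ : ℝ≥0∞) ^ ((b (findex u.toList) : ℝ) / γ) := by
  have hm : m < a (findex u.toList) :=
    (by simpa using length_lt_findex u.toList : m < findex u.toList).trans_le ha.le_apply
  have htake : (u.toList ++ t.toList).take m = u.toList := by simp
  rw [ediam_Vset, Vexp_of_eq_a_findex_take ha.injective b (m := m) (by simp; omega)
    (by simp [htake]; omega), htake]

theorem two_pow_mul_inv_two_pow_add (k j : ℕ) : (2 : ℝ≥0∞) ^ k * 2⁻¹ ^ (k + j) = 2⁻¹ ^ j := by
  rw [pow_add, ← mul_assoc, ← mul_pow, ENNReal.mul_inv_cancel two_ne_zero ofNat_ne_top, one_pow,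
    one_mul]

theorem sum_ediam_Vset_rpow_le {γ d : ℝ} {a : ℕ → ℕ} (ha : StrictMono a) (b : ℕ → ℕ) {m : ℕ}
    (hexp : ∀ i, m < i → (2 * a i : ℝ) ≤ b i / γ * d) :
    ∑ p : Σ u : List.Vector Bool m, List.Vector Bool (a (findex u.toList) - m),
      ediam (Vset γ a b (p.1.toList ++ p.2.toList)) ^ d ≤ 2⁻¹ ^ m := by
  have hblock : ∀ u : List.Vector Bool m,
      ∑ t : List.Vector Bool (a (findex u.toList) - m),
        ediam (Vset γ a b (u.toList ++ t.toList)) ^ d ≤ 2⁻¹ ^ (2 * m) := by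
    intro u
    set f := findex u.toList
    have hmf : m < f := by simpa using length_lt_findex u.toList
    have hmaf : m < a f := hmf.trans_le ha.le_apply
    calc ∑ t : List.Vector Bool (a f - m), ediam (Vset γ a b (u.toList ++ t.toList)) ^ d
        = 2 ^ (a f - m) * (2⁻¹ : ℝ≥0∞) ^ ((b f : ℝ) / γ * d) := by
          simp [ediam_Vset_append ha, ← ENNReal.rpow_mul, card_vector, f]
      _ ≤ 2 ^ (a f - m) * 2⁻¹ ^ (a f - m + (a f + m)) := by
          rw [← ENNReal.rpow_natCast 2⁻¹]
          refine mul_le_mul_right (ENNReal.rpow_le_rpow_of_exponent_ge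
            (ENNReal.inv_le_one.mpr one_le_two) ?_) _
          push_cast [Nat.cast_sub hmaf.le]
          linarith [hexp f hmf]
      _ ≤ 2⁻¹ ^ (2 * m) := by
          rw [two_pow_mul_inv_two_pow_add]
          exact pow_le_pow_right_of_le_one' (ENNReal.inv_le_one.mpr one_le_two) (by omega)
  calc _ = ∑ u : List.Vector Bool m, ∑ t : List.Vector Bool (a (findex u.toList) - m),
        ediam (Vset γ a b (u.toList ++ t.toList)) ^ d := Fintype.sum_sigma _
    _ ≤ ∑ _u : List.Vector Bool m, (2⁻¹ : ℝ≥0∞) ^ (2 * m) := Finset.sum_le_sum fun u _ => hblock u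
    _ = 2⁻¹ ^ m := by
      simp [card_vector, two_mul, two_pow_mul_inv_two_pow_add]

theorem hausdorffMeasure_Fset_eq_zero {γ : ℝ} (hγ : 0 < γ) {a b : ℕ → ℕ} (ha : StrictMono a)
    (hb : Monotone b) (ha0 : a 0 = 1) (hb0 : b 0 = 1)
    (hab : ∀ i j, i ≤ j → a j - a i ≤ b j - b i)
    (har : Tendsto (fun i => (a i : ℝ) / (b i : ℝ)) atTop (𝓝 0)) {d : ℝ} (hd : 0 < d) :
    μH[d] (Fset γ a b) = 0 := by
  obtain ⟨N, hN⟩ : ∃ N, ∀ i, N ≤ i → (2 * a i : ℝ) ≤ b i / γ * d := by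
    obtain ⟨N, hN⟩ := eventually_atTop.mp (har.eventually (gt_mem_nhds (by positivity :
      0 < d / γ / 2)))
    refine ⟨N, fun i hi => ?_⟩
    have hbi : 1 ≤ b i := hb0 ▸ hb i.zero_le
    have := (div_lt_iff₀ (by exact_mod_cast hbi)).mp (hN i hi)
    linarith [show d / γ / 2 * b i = b i / γ * d / 2 by ring]
  refine hausdorffMeasure_eq_zero_of_tendsto_sum hd _
    (Fset_subset_iUnion_Vset hγ.le ha hb ha0 hb0 hab) ?_
  refine tendsto_of_tendsto_of_tendsto_of_le_of_le' tendsto_const_nhds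
    (ENNReal.tendsto_pow_atTop_nhds_zero_of_lt_one (ENNReal.inv_lt_one.mpr one_lt_two))
    (.of_forall fun _ => zero_le) (eventually_atTop.mpr ⟨N, fun m hm => ?_⟩)
  exact sum_ediam_Vset_rpow_le ha b fun i hi => hN i (by omega)

theorem statement17_general (γ : ℝ) (hγ : 0 < γ)
    (a b : ℕ → ℕ) (ha : StrictMono a) (hb : StrictMono b)
    (ha0 : a 0 = 1) (hb0 : b 0 = 1)
    (hab : ∀ i j, i ≤ j → a j - a i ≤ b j - b i)
    (har : Filter.Tendsto (fun i => (a i : ℝ) / (b i : ℝ)) Filter.atTop (nhds 0)) :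
    dimH (Fset γ a b) = 0 := by
  refine le_antisymm (dimH_le fun d hd => ?_) zero_le
  by_contra! hpos
  have := hausdorffMeasure_Fset_eq_zero hγ ha hb.monotone ha0 hb0 hab har (d := d) (by simpa using hpos)
  simp [this] at hd

/-- `dim_H F(γ,a,b) = 0`. -/
theorem statement17 (γ : ℝ) (hγ : 0 < γ) (hγ1 : γ ≤ 1)
    (a b : ℕ → ℕ) (ha : StrictMono a) (hb : StrictMono b)
    (hapos : ∀ i, 0 < a i) (hbpos : ∀ i, 0 < b i)
    (ha0 : a 0 = 1) (hb0 : b 0 = 1)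
    (hab : ∀ i j, i ≤ j → a j - a i ≤ b j - b i)
    (har : Filter.Tendsto (fun i => (a i : ℝ) / (b i : ℝ)) Filter.atTop (nhds 0))
    (hbr : Filter.Tendsto (fun i => (b i : ℝ) / (a (i+1) : ℝ)) Filter.atTop (nhds 0)) :
    dimH (Fset γ a b) = 0 :=
  statement17_general γ hγ a b ha hb ha0 hb0 hab har
end
end
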